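/- arXiv:2108.03964 — 2 statements merged into one kernel-verified Lean document; each statement's English description precedes it below -/
import Mathlib

section
/- Let a ∈ [−1,0). For every γ > 0 there exists a constant C_γ > 0 such that ∫_ℝ e^{γ|τ|}(|φ_a(τ)|² + |φ_a'(τ)|²) dτ ≤ C_γ, where φ_a is the positive L²-normalized ground state of the fiber operator 𝔥_a[ζ_a]. -/
/-!
Common setup for the formalization of
"Semiclassical eigenvalue estimates under magnetic steps" (Assaad–Helffer–Kachmar).
-/

noncomputable section

open MeasureTheory Set

namespace MagStep

/-! ### The one-dimensional fiber (model) operator -/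

/-- The step function `b_a`: equal to `1` for `τ ≥ 0` and to `a` for `τ < 0`. -/
def bStep (a τ : ℝ) : ℝ := if 0 ≤ τ then 1 else a

/-- The potential of the fiber operator `𝔥_a[ξ] = -d²/dτ² + (ξ + b_a(τ)τ)²`. -/
def fiberPot (a ξ τ : ℝ) : ℝ := (ξ + bStep a τ * τ) ^ 2

/-- The quadratic form `q_a[ξ]` of the fiber operator. -/
def fiberForm (a ξ : ℝ) (u : ℝ → ℂ) : ℝ :=
  ∫ τ : ℝ, (‖deriv u τ‖ ^ 2 + fiberPot a ξ τ * ‖u τ‖ ^ 2)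

/-- Admissible functions (a core of the form domain `B¹(ℝ)`). -/
def fiberAdmissible (u : ℝ → ℂ) : Prop :=
  ContDiff ℝ 1 u ∧ Integrable (fun τ : ℝ => ‖u τ‖ ^ 2) ∧
    Integrable (fun τ : ℝ => ‖deriv u τ‖ ^ 2) ∧
    Integrable (fun τ : ℝ => τ ^ 2 * ‖u τ‖ ^ 2)

/-- The band function `μ_a(ξ)`: the bottom of the spectrum of `𝔥_a[ξ]`,
characterized variationally by the Rayleigh quotient. -/
def bandFunction (a ξ : ℝ) : ℝ :=
  sInf ((fun u : ℝ → ℂ => fiberForm a ξ u / ∫ τ : ℝ, ‖u τ‖ ^ 2) ''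
    {u : ℝ → ℂ | fiberAdmissible u ∧ (∫ τ : ℝ, ‖u τ‖ ^ 2) ≠ 0})

/-- `β_a = inf_ξ μ_a(ξ)`. -/
def betaConst (a : ℝ) : ℝ := sInf (Set.range (bandFunction a))

/-- `φ_a` is the positive `L²`-normalized ground state of `𝔥_a[ζ_a]`
with ground state energy `β_a`. -/
structure IsGroundState (a ζ : ℝ) (φ : ℝ → ℝ) : Prop where
  pos : ∀ τ, 0 < φ τ
  smooth : ContDiff ℝ 1 φ
  eqn : ∀ τ, - deriv (deriv φ) τ + fiberPot a ζ τ * φ τ = betaConst a * φ τ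
  normalized : (∫ τ : ℝ, (φ τ) ^ 2) = 1
  memL2 : Integrable fun τ : ℝ => (φ τ) ^ 2
  derivL2 : Integrable fun τ : ℝ => (deriv φ τ) ^ 2

/-- `ζ_a` is the unique non-degenerate minimum of the band function `μ_a`,
and it is negative. -/
structure IsUniqueMin (a ζ : ℝ) : Prop where
  neg : ζ < 0
  eq_min : bandFunction a ζ = betaConst a
  unique : ∀ ξ : ℝ, ξ ≠ ζ → bandFunction a ζ < bandFunction a ξ
  nondeg : 0 < iteratedDeriv 2 (bandFunction a) ζ

/-- `c₂(a) = μ_a''(ζ_a)/2`. -/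
def c2Const (a ζ : ℝ) : ℝ := iteratedDeriv 2 (bandFunction a) ζ / 2

/-- `M₃(a) = (1/3)(1/a − 1) ζ_a φ_a(0) φ_a'(0)`. -/
def M3Const (a ζ : ℝ) (φ : ℝ → ℝ) : ℝ := (1 / 3) * (1 / a - 1) * ζ * φ 0 * deriv φ 0

/-- `w` solves `(𝔥_a[ζ_a] − β_a) w = rhs`, with `w ⟂ φ_a` in `L²(ℝ)`;
i.e. `w = 𝔯_a (rhs)` is the regularized resolvent applied to `rhs` (for `rhs ⟂ φ_a`). -/
structure IsResolventSol (a ζ : ℝ) (φ : ℝ → ℝ) (rhs w : ℝ → ℝ) : Prop where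
  memL2 : Integrable fun τ : ℝ => (w τ) ^ 2
  orth : (∫ τ : ℝ, w τ * φ τ) = 0
  smooth : ContDiff ℝ 1 w
  eqn : ∀ τ, - deriv (deriv w) τ + fiberPot a ζ τ * w τ - betaConst a * w τ = rhs τ

/-- The operator `𝔥⁽¹⁾[ζ_a]` applied to `φ`:
`𝔥⁽¹⁾[ζ_a] φ = φ' + 2τ(b_a τ + ζ_a)² φ − b_a τ²(b_a τ + ζ_a) φ`. -/
def h1Apply (a ζ : ℝ) (φ : ℝ → ℝ) (τ : ℝ) : ℝ :=
  deriv φ τ + 2 * τ * (bStep a τ * τ + ζ) ^ 2 * φ τ -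
    bStep a τ * τ ^ 2 * (bStep a τ * τ + ζ) * φ τ

/-! ### The one-dimensional weighted (curvature) model -/

/-- The weighted quadratic form `q_{a,ξ,κ,h}` on `H¹₀(−h^{−δ}, h^{−δ})`. -/
def qWeight1D (a ξ κ h δ : ℝ) (u : ℝ → ℂ) : ℝ :=
  ∫ τ in Set.Ioo (-(h ^ (-δ))) (h ^ (-δ)),
    (‖deriv u τ‖ ^ 2 +
        (1 + 2 * κ * h ^ ((1:ℝ)/2) * τ) *
          (bStep a τ * τ + ξ - κ * h ^ ((1:ℝ)/2) * bStep a τ * τ ^ 2 / 2) ^ 2 *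
          ‖u τ‖ ^ 2) *
      (1 - κ * h ^ ((1:ℝ)/2) * τ)

/-- A core of `H¹₀(−L, L)`: smooth functions compactly supported in `(−L, L)`. -/
def dirichletCore (L : ℝ) (u : ℝ → ℂ) : Prop :=
  ContDiff ℝ 1 u ∧ HasCompactSupport u ∧ tsupport u ⊆ Set.Ioo (-L) L

/-- The ground state energy `λ₁(𝓗_{a,ξ,κ,h})` of the weighted 1D operator,
given by its variational characterization. -/
def lamW1 (a ξ κ h δ : ℝ) : ℝ :=
  sInf ((fun u : ℝ → ℂ => qWeight1D a ξ κ h δ u) ''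
    {u : ℝ → ℂ | dirichletCore (h ^ (-δ)) u ∧
      (∫ τ in Set.Ioo (-(h ^ (-δ))) (h ^ (-δ)),
          ‖u τ‖ ^ 2 * (1 - κ * h ^ ((1:ℝ)/2) * τ)) = 1})

/-! ### The two-dimensional magnetic operator -/

/-- Weak (distributional) formulation of `curl F = B` in the plane. -/
def HasWeakCurl (F : ℝ × ℝ → ℝ × ℝ) (B : ℝ × ℝ → ℝ) : Prop :=
  ∀ ψ : ℝ × ℝ → ℝ, ContDiff ℝ (⊤ : ℕ∞) ψ → HasCompactSupport ψ →
    (∫ x : ℝ × ℝ, ((F x).1 * fderiv ℝ ψ x (0, 1) - (F x).2 * fderiv ℝ ψ x (1, 0))) =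
      ∫ x : ℝ × ℝ, B x * ψ x

/-- First magnetic derivative `(h ∂₁ − i F₁) u`. -/
def magD1 (h : ℝ) (F : ℝ × ℝ → ℝ × ℝ) (u : ℝ × ℝ → ℂ) (x : ℝ × ℝ) : ℂ :=
  (h : ℂ) * fderiv ℝ u x (1, 0) - Complex.I * ((F x).1 : ℝ) * u x

/-- Second magnetic derivative `(h ∂₂ − i F₂) u`. -/
def magD2 (h : ℝ) (F : ℝ × ℝ → ℝ × ℝ) (u : ℝ × ℝ → ℂ) (x : ℝ × ℝ) : ℂ :=
  (h : ℂ) * fderiv ℝ u x (0, 1) - Complex.I * ((F x).2 : ℝ) * u x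

/-- `|(h∇ − iF)u|²`. -/
def magSq (h : ℝ) (F : ℝ × ℝ → ℝ × ℝ) (u : ℝ × ℝ → ℂ) (x : ℝ × ℝ) : ℝ :=
  ‖magD1 h F u x‖ ^ 2 + ‖magD2 h F u x‖ ^ 2

/-- The magnetic quadratic form `Q_h(u) = ∫_Ω |(h∇ − iF)u|² dx`. -/
def magForm (h : ℝ) (F : ℝ × ℝ → ℝ × ℝ) (Ω : Set (ℝ × ℝ)) (u : ℝ × ℝ → ℂ) : ℝ :=
  ∫ x in Ω, magSq h F u x

/-- Test functions: smooth functions compactly supported inside `Ω`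
(a form core for the Dirichlet realization). -/
def testFun (Ω : Set (ℝ × ℝ)) (u : ℝ × ℝ → ℂ) : Prop :=
  ContDiff ℝ (⊤ : ℕ∞) u ∧ HasCompactSupport u ∧ tsupport u ⊆ Ω

/-- The `n`-th min–max eigenvalue `λ_n(h)` of the Dirichlet realization
`𝒫_h = −(h∇ − iF)²` in `Ω` (Courant–Fischer over a form core). -/
def dirEigenvalue (h : ℝ) (F : ℝ × ℝ → ℝ × ℝ) (Ω : Set (ℝ × ℝ)) (n : ℕ) : ℝ :=
  sInf {r : ℝ | ∃ v : Fin n → ℝ × ℝ → ℂ, (∀ i, testFun Ω (v i)) ∧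
      LinearIndependent ℂ v ∧
      ∀ u ∈ Submodule.span ℂ (Set.range v),
        magForm h F Ω u ≤ r * ∫ x in Ω, ‖u x‖ ^ 2}

/-- The magnetic sesquilinear form associated with `Q_h`. -/
def sesqForm (h : ℝ) (F : ℝ × ℝ → ℝ × ℝ) (Ω : Set (ℝ × ℝ)) (u v : ℝ × ℝ → ℂ) : ℂ :=
  ∫ x in Ω, (magD1 h F u x * (starRingEnd ℂ) (magD1 h F v x) +
    magD2 h F u x * (starRingEnd ℂ) (magD2 h F v x))

/-- `ψ` is an `L²`-normalized eigenfunction of the Dirichlet realization `𝒫_h`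
with eigenvalue `lam` (weak formulation). -/
structure IsNormalizedEigenfun (h lam : ℝ) (F : ℝ × ℝ → ℝ × ℝ) (Ω : Set (ℝ × ℝ))
    (ψ : ℝ × ℝ → ℂ) : Prop where
  zero_outside : ∀ x, x ∉ Ω → ψ x = 0
  cont : Continuous ψ
  diff : ∀ x ∈ Ω, DifferentiableAt ℝ ψ x
  memL2 : IntegrableOn (fun x => ‖ψ x‖ ^ 2) Ω
  magL2 : IntegrableOn (fun x => magSq h F ψ x) Ω
  normalized : (∫ x in Ω, ‖ψ x‖ ^ 2) = 1
  eigen : ∀ v : ℝ × ℝ → ℂ, testFun Ω v →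
    sesqForm h F Ω ψ v = (lam : ℂ) * ∫ x in Ω, ψ x * (starRingEnd ℂ) (v x)

/-! ### The curve `Γ`, its curvature and Frenet coordinates -/

/-- The unit normal of the curve (rotation of the unit tangent by `+π/2`),
pointing into `P₁`. -/
def curveNormal (M : ℝ → ℝ × ℝ) (s : ℝ) : ℝ × ℝ := (-(deriv M s).2, (deriv M s).1)

/-- The (signed) curvature `k(s)` of the arclength-parametrized curve:
`T'(s) = k(s) ν(s)`. -/
def curvature (M : ℝ → ℝ × ℝ) (s : ℝ) : ℝ :=
  (deriv (deriv M) s).1 * (curveNormal M s).1 + (deriv (deriv M) s).2 * (curveNormal M s).2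

/-- The Frenet (tubular) coordinate map `Φ(s,t) = M(s) + t ν(s)`. -/
def frenetMap (M : ℝ → ℝ × ℝ) (p : ℝ × ℝ) : ℝ × ℝ := M p.1 + p.2 • curveNormal M p.1

/-- The Frenet coordinates are valid on the tube of width `t₀`. -/
def FrenetValid (M : ℝ → ℝ × ℝ) (t₀ : ℝ) : Prop :=
  0 < t₀ ∧ Set.InjOn (frenetMap M) (Set.univ ×ˢ Set.Ioo (-t₀) t₀) ∧
    {x : ℝ × ℝ | Metric.infDist x (Set.range M) < t₀} ⊆
      frenetMap M '' (Set.univ ×ˢ Set.Ioo (-t₀) t₀)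

/-- In the chosen gauge, the pulled-back magnetic potential in Frenet coordinates is
`F̃(s,t) = (−b_a(t)(t − t²k(s)/2), 0)`. -/
def gaugeNormalized (a : ℝ) (M : ℝ → ℝ × ℝ) (F : ℝ × ℝ → ℝ × ℝ) (t₀ : ℝ) : Prop :=
  ∀ s : ℝ, ∀ t ∈ Set.Ioo (-t₀) t₀,
    (1 - t * curvature M s) *
        ((F (frenetMap M (s, t))).1 * (deriv M s).1 +
          (F (frenetMap M (s, t))).2 * (deriv M s).2) =
      - bStep a t * (t - t ^ 2 * curvature M s / 2) ∧
    (F (frenetMap M (s, t))).1 * (curveNormal M s).1 +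
      (F (frenetMap M (s, t))).2 * (curveNormal M s).2 = 0

/-- Standard cut-off function: smooth, valued in `[0,1]`, supported in `[−1,1]`,
equal to `1` on `[−1/2,1/2]`. -/
structure IsCutoff (χ : ℝ → ℝ) : Prop where
  smooth : ContDiff ℝ (⊤ : ℕ∞) χ
  mem01 : ∀ x, χ x ∈ Set.Icc (0 : ℝ) 1
  supp : ∀ x : ℝ, 1 ≤ |x| → χ x = 0
  eq_one : ∀ x : ℝ, |x| ≤ 1 / 2 → χ x = 1

/-! ### The full geometric/magnetic setup -/

/-- The full setup of the paper: a bounded, simply connected, smooth domain `Ω`,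
a smooth curve `Γ = range M` splitting the plane into `P₁`, `P₂`, a magnetic
potential `F` with `curl F = 1_{P₁} + a 1_{P₂}` (`−1 < a < 0`), the spectral
quantities `ζ_a`, `φ_a` of the fiber operator, and the curvature assumption:
the curvature of `Γ` has a unique non-degenerate maximum attained in `Γ ∩ Ω`
(at arclength `s = 0`). -/
structure StepMagSetup where
  a : ℝ
  Ω : Set (ℝ × ℝ)
  P₁ : Set (ℝ × ℝ)
  P₂ : Set (ℝ × ℝ)
  M : ℝ → ℝ × ℝ
  F : ℝ × ℝ → ℝ × ℝ
  ζ : ℝ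
  φ : ℝ → ℝ
  ha : a ∈ Set.Ioo (-1 : ℝ) 0
  hΩ_open : IsOpen Ω
  hΩ_bdd : Bornology.IsBounded Ω
  hΩ_ne : Ω.Nonempty
  hΩ_sc : SimplyConnectedSpace Ω
  hP₁_open : IsOpen P₁
  hP₂_open : IsOpen P₂
  hP_disj : Disjoint P₁ P₂
  hP₁_unbdd : ¬ Bornology.IsBounded P₁
  hP₂_unbdd : ¬ Bornology.IsBounded P₂
  hM_smooth : ContDiff ℝ (⊤ : ℕ∞) M
  hM_inj : Function.Injective M
  hM_unit : ∀ s, (deriv M s).1 ^ 2 + (deriv M s).2 ^ 2 = 1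
  hsplit : P₁ ∪ P₂ ∪ Set.range M = Set.univ
  hΓ_P₁ : Disjoint (Set.range M) P₁
  hΓ_P₂ : Disjoint (Set.range M) P₂
  hstraight : ∃ R > 0, ∀ s : ℝ, R ≤ |s| → curvature M s = 0
  hnormal_dir : ∀ s : ℝ, ∃ ε > 0, ∀ t ∈ Set.Ioo (0 : ℝ) ε, M s + t • curveNormal M s ∈ P₁
  hcross : ∃ s₁ s₂ : ℝ, s₁ ≠ s₂ ∧ Set.range M ∩ frontier Ω = {M s₁, M s₂}
  hΩ₁_ne : (Ω ∩ P₁).Nonempty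
  hΩ₂_ne : (Ω ∩ P₂).Nonempty
  hF_L2loc : ∀ R : ℝ, IntegrableOn (fun x => (F x).1 ^ 2 + (F x).2 ^ 2) (Metric.closedBall 0 R)
  hF_curl : HasWeakCurl F
    (fun x => Set.indicator P₁ (fun _ => (1 : ℝ)) x + a * Set.indicator P₂ (fun _ => (1 : ℝ)) x)
  hζ : IsUniqueMin a ζ
  hφ : IsGroundState a ζ φ
  hk_unique_max : ∀ s : ℝ, s ≠ 0 → curvature M s < curvature M 0
  hk_max_int : M 0 ∈ Ω
  hk2_neg : iteratedDeriv 2 (curvature M) 0 < 0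
  hM3_neg : M3Const a ζ φ < 0

namespace StepMagSetup

/-- Maximal curvature `k_max = k(0)`. -/
def kmax (S : StepMagSetup) : ℝ := curvature S.M 0

/-- `k₂ = k''(0) < 0`. -/
def k2 (S : StepMagSetup) : ℝ := iteratedDeriv 2 (curvature S.M) 0

/-- `β_a`. -/
def β (S : StepMagSetup) : ℝ := betaConst S.a

/-- `c₂(a)`. -/
def c2 (S : StepMagSetup) : ℝ := c2Const S.a S.ζ

/-- `M₃(a)`. -/
def M3 (S : StepMagSetup) : ℝ := M3Const S.a S.ζ S.φ

/-- `λ_n(h)`. -/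
def lam (S : StepMagSetup) (h : ℝ) (n : ℕ) : ℝ := dirEigenvalue h S.F S.Ω n

end StepMagSetup

/-! ### Rescaled quantities near the magnetic edge -/

/-- The rescaled, truncated version of a function `g` defined near the edge:
`w_h(σ,τ) = h^{5/16} χ(h^η σ) χ(h^δ τ) g̃(h^{1/8}σ, h^{1/2}τ)`,
where `g̃ = g ∘ Φ` is `g` read in Frenet coordinates. -/
def rescaledTrunc (M : ℝ → ℝ × ℝ) (χ : ℝ → ℝ) (η δ h : ℝ) (g : ℝ × ℝ → ℂ)
    (p : ℝ × ℝ) : ℂ :=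
  ((h ^ ((5:ℝ)/16) * χ (h ^ η * p.1) * χ (h ^ δ * p.2) : ℝ) : ℂ) *
    g (frenetMap M (h ^ ((1:ℝ)/8) * p.1, h ^ ((1:ℝ)/2) * p.2))

/-- `L²(ℝ²)` norm. -/
def l2norm2 (w : ℝ × ℝ → ℂ) : ℝ := Real.sqrt (∫ p : ℝ × ℝ, ‖w p‖ ^ 2)

/-- `L²(ℝ)` norm. -/
def l2norm1 (f : ℝ → ℂ) : ℝ := Real.sqrt (∫ σ : ℝ, ‖f σ‖ ^ 2)

/-- The tangential operator `c ∂_σ − iζ`. -/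
def tangOp (c ζ : ℝ) (w : ℝ × ℝ → ℂ) (p : ℝ × ℝ) : ℂ :=
  (c : ℂ) * fderiv ℝ w p (1, 0) - Complex.I * (ζ : ℝ) * w p

/-- `∂_σ`. -/
def Dsig (v : ℝ × ℝ → ℂ) (p : ℝ × ℝ) : ℂ := fderiv ℝ v p (1, 0)

/-- `∂_τ`. -/
def Dtau (v : ℝ × ℝ → ℂ) (p : ℝ × ℝ) : ℂ := fderiv ℝ v p (0, 1)

/-- `𝔞̌(σ,τ;h) = 1 − h^{1/2} τ k(h^{1/8}σ)`. -/
def aCheck (M : ℝ → ℝ × ℝ) (h : ℝ) (p : ℝ × ℝ) : ℝ :=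
  1 - h ^ ((1:ℝ)/2) * p.2 * curvature M (h ^ ((1:ℝ)/8) * p.1)

/-- `𝔞̌₂(σ,τ;h) = 1 − h^{1/2} τ k(h^{1/8}σ)/2`. -/
def aCheck2 (M : ℝ → ℝ × ℝ) (h : ℝ) (p : ℝ × ℝ) : ℝ :=
  1 - h ^ ((1:ℝ)/2) * p.2 * curvature M (h ^ ((1:ℝ)/8) * p.1) / 2

/-- The operator `h^{7/8}∂_σ + i h^{1/2} b_a(τ) τ 𝔞̌₂`. -/
def Lcheck (a h : ℝ) (M : ℝ → ℝ × ℝ) (v : ℝ × ℝ → ℂ) (p : ℝ × ℝ) : ℂ :=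
  ((h ^ ((7:ℝ)/8) : ℝ) : ℂ) * Dsig v p +
    Complex.I * ((h ^ ((1:ℝ)/2) * bStep a p.2 * p.2 * aCheck2 M h p : ℝ) : ℂ) * v p

/-- The rescaled operator `𝒫̌_h`. -/
def Pcheck (a h : ℝ) (M : ℝ → ℝ × ℝ) (v : ℝ × ℝ → ℂ) (p : ℝ × ℝ) : ℂ :=
  - ((aCheck M h p : ℝ) : ℂ)⁻¹ *
      Lcheck a h M (fun q => ((aCheck M h q : ℝ) : ℂ)⁻¹ * Lcheck a h M v q) p -
    (h : ℂ) * ((aCheck M h p : ℝ) : ℂ)⁻¹ *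
      Dtau (fun q => ((aCheck M h q : ℝ) : ℂ) * Dtau v q) p

/-- The phase `e^{iσζ_a/h^{3/8}}`. -/
def phase (ζ h : ℝ) (p : ℝ × ℝ) : ℂ :=
  Complex.exp (Complex.I * (p.1 : ℝ) * (ζ : ℝ) / ((h ^ ((3:ℝ)/8) : ℝ) : ℂ))

/-- The conjugated operator
`𝒫_h^{new} = e^{−iσζ_a/h^{3/8}} h^{−1} 𝒫̌_h e^{iσζ_a/h^{3/8}} − β_a`. -/
def Pnew (a ζ h : ℝ) (M : ℝ → ℝ × ℝ) (v : ℝ × ℝ → ℂ) (p : ℝ × ℝ) : ℂ :=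
  (phase ζ h p)⁻¹ * (h : ℂ)⁻¹ * Pcheck a h M (fun q => phase ζ h q * v q) p -
    ((betaConst a : ℝ) : ℂ) * v p

/-- The projection `Π₀ = R₀⁺R₀⁻`: `(Π₀ v)(σ,τ) = φ_a(τ) ∫ φ_a(τ')v(σ,τ')dτ'`. -/
def proj0 (φ : ℝ → ℝ) (v : ℝ × ℝ → ℂ) (p : ℝ × ℝ) : ℂ :=
  ((φ p.2 : ℝ) : ℂ) * ∫ τ : ℝ, ((φ τ : ℝ) : ℂ) * v (p.1, τ)

/-- The gauged rescaled truncated eigenfunction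
`v_{h,n}(σ,τ) = e^{−iζ_aσ/h^{3/8}} u_{h,n}(σ,τ)`. -/
def vhn (_a ζ : ℝ) (M : ℝ → ℝ × ℝ) (χ : ℝ → ℝ) (η δ h : ℝ) (ψ : ℝ × ℝ → ℂ)
    (p : ℝ × ℝ) : ℂ :=
  (phase ζ h p)⁻¹ * rescaledTrunc M χ η δ h ψ p

/-- The corrected transverse quasi-mode `φ_{a,h}(τ) = χ(h^δτ)(φ_a(τ) + h^{1/2}κ φ_a^{cor}(τ))`. -/
def phiah (φ φcor χ : ℝ → ℝ) (κ δ h : ℝ) (τ : ℝ) : ℝ :=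
  χ (h ^ δ * τ) * (φ τ + h ^ ((1:ℝ)/2) * κ * φcor τ)

/-- Orthogonal projection, in the weighted space
`L²(I; w dτ)`, onto the span of `f`, acting in the transverse variable. -/
def projW (f w : ℝ → ℝ) (I : Set ℝ) (v : ℝ × ℝ → ℂ) (p : ℝ × ℝ) : ℂ :=
  ((f p.2 : ℝ) : ℂ) *
    ((∫ τ in I, ((f τ * w τ : ℝ) : ℂ) * v (p.1, τ)) /
      (((∫ τ in I, (f τ) ^ 2 * w τ) : ℝ) : ℂ))

/-- Squared norm of the weighted space `X²_{h,δ} = L²(ℝ × I; w(τ) dσ dτ)`. -/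
def XnormSq (w : ℝ → ℝ) (I : Set ℝ) (v : ℝ × ℝ → ℂ) : ℝ :=
  ∫ p in (Set.univ ×ˢ I : Set (ℝ × ℝ)), ‖v p‖ ^ 2 * w p.2

/-- `R₀⁻ : L²(ℝ²) → L²(ℝ)`, `(R₀⁻v)(σ) = ∫ φ_a(τ) v(σ,τ) dτ`. -/
def R0minus (φ : ℝ → ℝ) (v : ℝ × ℝ → ℂ) (σ : ℝ) : ℂ :=
  ∫ τ : ℝ, ((φ τ : ℝ) : ℂ) * v (σ, τ)

/-- `φ̂_a = φ_a − 4(b_a τ + ζ_a) 𝔯_a[(b_a τ + ζ_a)φ_a]`, where `ϕr = 𝔯_a[(b_a τ + ζ_a)φ_a]`. -/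
def phiHat (a ζ : ℝ) (φ ϕr : ℝ → ℝ) (τ : ℝ) : ℝ :=
  φ τ - 4 * (bStep a τ * τ + ζ) * ϕr τ

/-- `R₀^{new} : L²(ℝ²) → L²(ℝ)`, `(R₀^{new}v)(σ) = ∫ φ̂_a(τ) v(σ,τ) dτ`. -/
def R0new (a ζ : ℝ) (φ ϕr : ℝ → ℝ) (v : ℝ × ℝ → ℂ) (σ : ℝ) : ℂ :=
  ∫ τ : ℝ, ((phiHat a ζ φ ϕr τ : ℝ) : ℂ) * v (σ, τ)

/-- `I₂(a) = ∫ (ζ_a + b_a τ)φ_a · 𝔯_a[(ζ_a + b_a τ)φ_a] dτ`, where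
`ϕr = 𝔯_a[(ζ_a + b_a τ)φ_a]`. -/
def I2Const (a ζ : ℝ) (φ ϕr : ℝ → ℝ) : ℝ :=
  ∫ τ : ℝ, (ζ + bStep a τ * τ) * φ τ * ϕr τ

end MagStep

namespace MagStep

/-- A positive function bounded below by a positive constant on a right ray cannot
be square-integrable. -/
private lemma not_integrable_ray {f : ℝ → ℝ} (hint : Integrable (fun τ : ℝ => f τ ^ 2))
    {c B : ℝ} (hc : 0 < c) (hcb : ∀ τ, B ≤ τ → c ≤ f τ) : False := by
  have h1 : IntegrableOn (fun τ : ℝ => f τ ^ 2) (Set.Ioi B) := hint.integrableOn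
  have h2 : IntegrableOn (fun _ : ℝ => c ^ 2) (Set.Ioi B) := by
    apply h1.mono' aestronglyMeasurable_const
    filter_upwards [MeasureTheory.ae_restrict_mem measurableSet_Ioi] with τ hτ
    have h3 := hcb τ (le_of_lt hτ)
    rw [Real.norm_eq_abs, abs_of_nonneg (by positivity)]
    nlinarith
  rw [MeasureTheory.integrableOn_const_iff] at h2
  rcases h2 with h2 | h2
  · simp at h2
    nlinarith
  · simp [Real.volume_Ioi] at h2

/-- Reflection of an integrable function on a ray. -/
private lemma integrableOn_comp_neg {g : ℝ → ℝ} {c : ℝ} (hg : IntegrableOn g (Set.Ioi c)) :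
    IntegrableOn (fun x => g (-x)) (Set.Iio (-c)) := by
  have h1 : Integrable (Set.indicator (Set.Ioi c) g) :=
    (MeasureTheory.integrable_indicator_iff measurableSet_Ioi).2 hg
  have h2 := h1.comp_neg
  have h3 : (fun x : ℝ => Set.indicator (Set.Ioi c) g (-x)) =
      Set.indicator (Set.Iio (-c)) (fun x : ℝ => g (-x)) := by
    funext x
    by_cases hx : x < -c
    · rw [Set.indicator_of_mem (by simpa [Set.mem_Ioi] using (by linarith : c < -x)),
        Set.indicator_of_mem (Set.mem_Iio.mpr hx)]
    · rw [Set.indicator_of_notMem (by simp only [Set.mem_Ioi]; intro h; exact hx (by linarith)),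
        Set.indicator_of_notMem (by simpa [Set.mem_Iio] using hx)]
  rw [h3] at h2
  exact (MeasureTheory.integrable_indicator_iff measurableSet_Iio).1 h2

/-- The key ODE/maximum-principle argument on a right ray: if a positive
square-integrable `C¹` function satisfies `f'' ≥ γ² f` on `[T, ∞)`, then `f` and
`|f'|` decay like `e^{-γτ}` there. -/
private lemma ray_decay {γ T : ℝ} (hγ : 0 < γ) (f f' : ℝ → ℝ)
    (hd : ∀ τ, HasDerivAt f (f' τ) τ)
    (hc' : Continuous f')
    (hpos : ∀ τ, 0 < f τ)
    (hint : Integrable (fun τ : ℝ => f τ ^ 2))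
    (hode : ∀ τ, T ≤ τ → ∃ d, HasDerivAt f' d τ ∧ γ ^ 2 * f τ ≤ d) :
    ∀ τ, T + 1 ≤ τ → f τ ≤ f T * Real.exp (γ * (T + 1)) * Real.exp (-γ * τ) ∧
      |f' τ| ≤ f T * Real.exp (γ * (T + 1)) * Real.exp (-γ * τ) := by
  have hfd : Differentiable ℝ f := fun τ => (hd τ).differentiableAt
  have hcf : Continuous f := hfd.continuous
  have hderiv : deriv f = f' := funext fun τ => (hd τ).deriv
  -- `f'` is strictly increasing on `[T, ∞)`
  have hf'mono : StrictMonoOn f' (Set.Ici T) := by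
    apply strictMonoOn_of_deriv_pos (convex_Ici T) hc'.continuousOn
    intro x hx
    rw [interior_Ici] at hx
    obtain ⟨d, hdd, hdge⟩ := hode x (le_of_lt hx)
    rw [hdd.deriv]
    exact lt_of_lt_of_le (mul_pos (pow_pos hγ 2) (hpos x)) hdge
  -- `f' < 0` on `[T, ∞)`
  have hf'neg : ∀ τ, T ≤ τ → f' τ < 0 := by
    intro τ₀ hτ₀
    by_contra hcon
    push_neg at hcon
    have h1 : 0 < f' (τ₀ + 1) :=
      lt_of_le_of_lt hcon (hf'mono (Set.mem_Ici.mpr hτ₀)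
        (Set.mem_Ici.mpr (by linarith)) (lt_add_one τ₀))
    have hmono : MonotoneOn f (Set.Ici (τ₀ + 1)) := by
      apply monotoneOn_of_deriv_nonneg (convex_Ici _) hcf.continuousOn
        (fun x _ => (hfd x).differentiableWithinAt)
      intro x hx
      rw [interior_Ici] at hx
      have hx' : τ₀ + 1 < x := hx
      rw [hderiv]
      have h2 : f' (τ₀ + 1) ≤ f' x :=
        hf'mono.monotoneOn (Set.mem_Ici.mpr (by linarith))
          (Set.mem_Ici.mpr (by linarith)) (le_of_lt hx')
      linarith
    exact not_integrable_ray hint (hpos (τ₀ + 1))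
      (fun τ hτ => hmono Set.self_mem_Ici (Set.mem_Ici.mpr hτ) hτ)
  -- The energy `E = f'² - γ² f²` is antitone on `[T, ∞)`
  set E : ℝ → ℝ := fun τ => f' τ ^ 2 - γ ^ 2 * f τ ^ 2 with hE
  have hEkey : ∀ x, T < x → ∃ d, HasDerivAt E (2 * f' x * d - γ ^ 2 * (2 * f x * f' x)) x ∧
      γ ^ 2 * f x ≤ d := by
    intro x hx
    obtain ⟨d, hdd, hdge⟩ := hode x (le_of_lt hx)
    refine ⟨d, ?_, hdge⟩
    have h1 : HasDerivAt (fun τ => f' τ ^ 2) (2 * f' x * d) x := by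
      have := hdd.fun_pow 2
      refine this.congr_deriv ?_
      push_cast
      ring
    have h2 : HasDerivAt (fun τ => γ ^ 2 * f τ ^ 2) (γ ^ 2 * (2 * f x * f' x)) x := by
      have := ((hd x).fun_pow 2).const_mul (γ ^ 2)
      refine this.congr_deriv ?_
      push_cast
      ring
    exact h1.sub h2
  have hEanti : AntitoneOn E (Set.Ici T) := by
    apply antitoneOn_of_deriv_nonpos (convex_Ici T)
      (((hc'.pow 2).sub (continuous_const.mul (hcf.pow 2))).continuousOn)
    · intro x hx
      rw [interior_Ici] at hx
      obtain ⟨d, hdd, _⟩ := hEkey x hx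
      exact hdd.differentiableAt.differentiableWithinAt
    · intro x hx
      rw [interior_Ici] at hx
      obtain ⟨d, hdd, hdge⟩ := hEkey x hx
      change deriv E x ≤ 0
      rw [hdd.deriv]
      have h3 := hf'neg x (le_of_lt hx)
      have h4 := hpos x
      nlinarith
  -- The energy is nonnegative on `[T, ∞)`
  have hE0 : ∀ τ, T ≤ τ → 0 ≤ E τ := by
    intro τ₁ hτ₁
    by_contra hcon
    push_neg at hcon
    have hE1 : f' τ₁ ^ 2 - γ ^ 2 * f τ₁ ^ 2 < 0 := hcon
    have hc : 0 < Real.sqrt (γ ^ 2 * f τ₁ ^ 2 - f' τ₁ ^ 2) / γ :=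
      div_pos (Real.sqrt_pos.mpr (by linarith)) hγ
    refine not_integrable_ray (B := τ₁) hint hc ?_
    intro τ hτ
    have h2 : E τ ≤ E τ₁ :=
      hEanti (Set.mem_Ici.mpr hτ₁) (Set.mem_Ici.mpr (by linarith)) hτ
    have h2' : f' τ ^ 2 - γ ^ 2 * f τ ^ 2 ≤ f' τ₁ ^ 2 - γ ^ 2 * f τ₁ ^ 2 := h2
    have h3 : γ ^ 2 * f τ₁ ^ 2 - f' τ₁ ^ 2 ≤ γ ^ 2 * f τ ^ 2 := by
      nlinarith [sq_nonneg (f' τ)]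
    have h4 : Real.sqrt (γ ^ 2 * f τ₁ ^ 2 - f' τ₁ ^ 2) ≤ γ * f τ := by
      rw [show γ * f τ = Real.sqrt ((γ * f τ) ^ 2) from
        (Real.sqrt_sq (mul_pos hγ (hpos τ)).le).symm]
      apply Real.sqrt_le_sqrt
      nlinarith
    rw [div_le_iff₀ hγ]
    nlinarith
  -- Hence `f' ≤ -γ f` on `[T, ∞)`
  have hf'le : ∀ τ, T ≤ τ → f' τ + γ * f τ ≤ 0 := by
    intro τ hτ
    have h0 : 0 ≤ f' τ ^ 2 - γ ^ 2 * f τ ^ 2 := hE0 τ hτ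
    have h1 := hf'neg τ hτ
    have h2 := hpos τ
    have h3 : 0 < γ * f τ - f' τ := by nlinarith [mul_pos hγ h2]
    nlinarith
  -- `e^{γτ} f` is antitone on `[T, ∞)`
  have hu : ∀ x : ℝ, HasDerivAt (fun τ => Real.exp (γ * τ) * f τ)
      (Real.exp (γ * x) * γ * f x + Real.exp (γ * x) * f' x) x := by
    intro x
    have h1 : HasDerivAt (fun τ : ℝ => γ * τ) γ x := by
      simpa using (hasDerivAt_id x).const_mul γ
    have h2 := h1.exp
    have h3 := h2.fun_mul (hd x)
    exact h3
  have huanti : AntitoneOn (fun τ => Real.exp (γ * τ) * f τ) (Set.Ici T) := by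
    refine antitoneOn_of_deriv_nonpos (convex_Ici T) ?_ ?_ ?_
    · exact Continuous.continuousOn (by fun_prop)
    · intro x _
      exact (hu x).differentiableAt.differentiableWithinAt
    · intro x hx
      rw [interior_Ici] at hx
      rw [(hu x).deriv]
      have h1 := hf'le x (le_of_lt hx)
      have h2 := Real.exp_pos (γ * x)
      nlinarith
  have hubound : ∀ τ, T ≤ τ → f τ ≤ f T * Real.exp (γ * T) * Real.exp (-γ * τ) := by
    intro τ hτ
    have h1 : Real.exp (γ * τ) * f τ ≤ Real.exp (γ * T) * f T :=
      huanti Set.self_mem_Ici (Set.mem_Ici.mpr hτ) hτ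
    have h2 := Real.exp_pos (γ * τ)
    have h3 : Real.exp (γ * τ) * Real.exp (-γ * τ) = 1 := by
      rw [← Real.exp_add]
      norm_num
    have h4 := Real.exp_pos (-γ * τ)
    calc f τ = (Real.exp (γ * τ) * f τ) * Real.exp (-γ * τ) := by
          rw [mul_comm (Real.exp (γ * τ)) (f τ), mul_assoc, h3, mul_one]
      _ ≤ (Real.exp (γ * T) * f T) * Real.exp (-γ * τ) := mul_le_mul_of_nonneg_right h1 h4.le
      _ = f T * Real.exp (γ * T) * Real.exp (-γ * τ) := by ring
  -- Step bound for `f'`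
  have hstep : ∀ s, T ≤ s → -f' (s + 1) ≤ f s := by
    intro s hs
    have hr : AntitoneOn (fun x => f x - f' (s + 1) * x) (Set.Icc s (s + 1)) := by
      refine antitoneOn_of_deriv_nonpos (convex_Icc _ _) ?_ ?_ ?_
      · exact Continuous.continuousOn (by fun_prop)
      · intro x _
        exact ((hd x).sub (by simpa using (hasDerivAt_id x).const_mul (f' (s + 1)))
          ).differentiableAt.differentiableWithinAt
      · intro x hx
        rw [interior_Icc] at hx
        change deriv (f - fun x => f' (s + 1) * x) x ≤ 0
        rw [((hd x).sub (by simpa using (hasDerivAt_id x).const_mul (f' (s + 1)) :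
          HasDerivAt (fun x : ℝ => f' (s + 1) * x) (f' (s + 1)) x)).deriv]
        have h1 : f' x ≤ f' (s + 1) :=
          hf'mono.monotoneOn (Set.mem_Ici.mpr (by linarith [hx.1]))
            (Set.mem_Ici.mpr (by linarith)) (le_of_lt hx.2)
        linarith
    have h1 : f (s + 1) - f' (s + 1) * (s + 1) ≤ f s - f' (s + 1) * s :=
      hr (Set.left_mem_Icc.mpr (by linarith)) (Set.right_mem_Icc.mpr (by linarith))
        (by linarith)
    have h2 := hpos (s + 1)
    nlinarith
  -- Conclusion
  intro τ hτ
  have hτT : T ≤ τ := by linarith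
  have hexp : Real.exp (γ * T) ≤ Real.exp (γ * (T + 1)) :=
    Real.exp_le_exp.mpr (by nlinarith)
  have hfT := hpos T
  have hexpneg := Real.exp_pos (-γ * τ)
  constructor
  · have h1 := hubound τ hτT
    nlinarith [mul_le_mul_of_nonneg_right (mul_le_mul_of_nonneg_left hexp hfT.le) hexpneg.le]
  · have h1 : T ≤ τ - 1 := by linarith
    have h2 := hstep (τ - 1) h1
    rw [show τ - 1 + 1 = τ from by ring] at h2
    have h3 := hf'neg τ hτT
    rw [abs_of_neg h3]
    have h4 := hubound (τ - 1) h1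
    have h5 : f T * Real.exp (γ * T) * Real.exp (-γ * (τ - 1)) =
        f T * Real.exp (γ * (T + 1)) * Real.exp (-γ * τ) := by
      rw [mul_assoc, mul_assoc, ← Real.exp_add, ← Real.exp_add]
      ring_nf
    rw [h5] at h4
    linarith

/-- **Proposition 2.1** (Agmon decay of the ground state).
Let `a ∈ [−1,0)`. For every `γ > 0` there is `C_γ > 0` such that
`∫_ℝ e^{γ|τ|}(|φ_a(τ)|² + |φ_a'(τ)|²) dτ ≤ C_γ`, where `φ_a` is the positive
`L²`-normalized ground state of the fiber operator `𝔥_a[ζ_a]`. -/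
theorem ground_state_decay (a ζ : ℝ) (φ : ℝ → ℝ)
    (ha : -1 ≤ a ∧ a < 0) (hζ : IsUniqueMin a ζ) (hφ : IsGroundState a ζ φ) :
    ∀ γ > (0 : ℝ), ∃ C > (0 : ℝ),
      Integrable (fun τ : ℝ => Real.exp (γ * |τ|) * ((φ τ) ^ 2 + (deriv φ τ) ^ 2)) ∧
      (∫ τ : ℝ, Real.exp (γ * |τ|) * ((φ τ) ^ 2 + (deriv φ τ) ^ 2)) ≤ C := by
  intro γ hγ
  obtain ⟨ha1, ha2⟩ := ha
  set β := betaConst a with hβdef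
  have heqn : ∀ τ, deriv (deriv φ) τ = (fiberPot a ζ τ - β) * φ τ := by
    intro τ
    linear_combination -(hφ.eqn τ)
  have hφpos := hφ.pos
  have hφdiff : Differentiable ℝ φ := hφ.smooth.differentiable one_ne_zero
  have hd : ∀ τ, HasDerivAt φ (deriv φ τ) τ := fun τ => (hφdiff τ).hasDerivAt
  have hc' : Continuous (deriv φ) := hφ.smooth.continuous_deriv le_rfl
  have hint : Integrable (fun τ : ℝ => φ τ ^ 2) := hφ.memL2
  -- threshold
  set s := Real.sqrt (γ ^ 2 + |β|) with hs
  have hs0 : 0 < s := Real.sqrt_pos.mpr (by positivity)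
  have hsq : s ^ 2 = γ ^ 2 + |β| := Real.sq_sqrt (by positivity)
  set T := (s + |ζ|) / (-a) with hT
  have hma : 0 < -a := by linarith
  have hma1 : -a ≤ 1 := by linarith
  have hT0 : 0 < T := div_pos (by positivity) hma
  have hTge : s + |ζ| ≤ T := by
    rw [hT, le_div_iff₀ hma]
    nlinarith [abs_nonneg ζ]
  -- potential lower bounds
  have hVright : ∀ τ, T ≤ τ → γ ^ 2 + β ≤ fiberPot a ζ τ := by
    intro τ hτ
    have hτ0 : 0 ≤ τ := le_trans (le_trans (by positivity) hTge) hτ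
    have h1 : s ≤ ζ + τ := by
      have := neg_abs_le ζ
      linarith
    have h2 : s ^ 2 ≤ (ζ + τ) ^ 2 := pow_le_pow_left₀ hs0.le h1 2
    rw [hsq] at h2
    have h3 := le_abs_self β
    unfold fiberPot bStep
    rw [if_pos hτ0]
    nlinarith
  have hVleft : ∀ τ, τ ≤ -T → γ ^ 2 + β ≤ fiberPot a ζ τ := by
    intro τ hτ
    have hτ0 : ¬ (0 ≤ τ) := by push_neg; linarith
    have h1 : s ≤ ζ + a * τ := by
      have h2 : (-a) * T ≤ (-a) * (-τ) := mul_le_mul_of_nonneg_left (by linarith) hma.le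
      have h3 : (-a) * T = s + |ζ| := by
        rw [hT]
        field_simp
        exact div_self (ne_of_lt ha2)
      nlinarith [neg_abs_le ζ]
    have h2 : s ^ 2 ≤ (ζ + a * τ) ^ 2 := pow_le_pow_left₀ hs0.le h1 2
    rw [hsq] at h2
    have h3 := le_abs_self β
    unfold fiberPot bStep
    rw [if_neg hτ0]
    nlinarith
  -- the second derivative exists and is large wherever the potential is large
  have hkey : ∀ t : ℝ, γ ^ 2 + β ≤ fiberPot a ζ t →
      HasDerivAt (deriv φ) (deriv (deriv φ) t) t ∧ γ ^ 2 * φ t ≤ deriv (deriv φ) t := by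
    intro t hV
    have hpos' := hφpos t
    have hVβ : 0 < fiberPot a ζ t - β := by nlinarith
    have hne : deriv (deriv φ) t ≠ 0 := by
      rw [heqn t]
      exact ne_of_gt (mul_pos hVβ hpos')
    have hdiff2 : DifferentiableAt ℝ (deriv φ) t := by
      by_contra hcon
      exact hne (deriv_zero_of_not_differentiableAt hcon)
    refine ⟨hdiff2.hasDerivAt, ?_⟩
    rw [heqn t]
    nlinarith
  have hodeR : ∀ τ, T ≤ τ → ∃ d, HasDerivAt (deriv φ) d τ ∧ γ ^ 2 * φ τ ≤ d := by
    intro τ hτ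
    obtain ⟨h1, h2⟩ := hkey τ (hVright τ hτ)
    exact ⟨_, h1, h2⟩
  -- the reflected function
  set ψ : ℝ → ℝ := fun τ => φ (-τ) with hψ
  set ψ' : ℝ → ℝ := fun τ => -deriv φ (-τ) with hψ'
  have hdψ : ∀ τ, HasDerivAt ψ (ψ' τ) τ := by
    intro τ
    have h1 : HasDerivAt (fun x : ℝ => -x) (-1 : ℝ) τ := by
      exact hasDerivAt_neg τ
    have h2 := (hd (-τ)).comp τ h1
    have h3 : HasDerivAt (fun x : ℝ => φ (-x)) (deriv φ (-τ) * (-1)) τ := h2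
    have h4 : deriv φ (-τ) * (-1) = ψ' τ := by rw [hψ']; ring
    rw [h4] at h3
    exact h3
  have hc'ψ : Continuous ψ' := (hc'.comp continuous_neg).neg
  have hposψ : ∀ τ, 0 < ψ τ := fun τ => hφpos (-τ)
  have hintψ : Integrable (fun τ : ℝ => ψ τ ^ 2) := by
    have := hint.comp_neg
    exact this
  have hodeL : ∀ τ, T ≤ τ → ∃ d, HasDerivAt ψ' d τ ∧ γ ^ 2 * ψ τ ≤ d := by
    intro τ hτ
    obtain ⟨h1, h2⟩ := hkey (-τ) (hVleft (-τ) (by linarith))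
    have h3 : HasDerivAt (fun x : ℝ => -x) (-1 : ℝ) τ := by
      exact hasDerivAt_neg τ
    have h4 := (h1.comp τ h3).neg
    have h5 : HasDerivAt (fun x : ℝ => -(deriv φ (-x))) (deriv (deriv φ) (-τ)) τ := by
      have h6 : -(deriv (deriv φ) (-τ) * (-1)) = deriv (deriv φ) (-τ) := by ring
      rw [h6] at h4
      exact h4
    exact ⟨deriv (deriv φ) (-τ), h5, h2⟩
  -- apply the ray decay lemma on both sides
  have hrayR := ray_decay hγ φ (deriv φ) hd hc' hφpos hint hodeR
  have hrayL := ray_decay hγ ψ ψ' hdψ hc'ψ hposψ hintψ hodeL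
  set C₁ : ℝ := φ T * Real.exp (γ * (T + 1)) with hC₁
  set C₂ : ℝ := ψ T * Real.exp (γ * (T + 1)) with hC₂
  set R := T + 1 with hR
  have hR0 : 0 < R := by rw [hR]; linarith
  -- the integrand
  set G : ℝ → ℝ := fun τ => Real.exp (γ * |τ|) * ((φ τ) ^ 2 + (deriv φ τ) ^ 2) with hG
  have hGcont : Continuous G := by
    rw [hG]
    have := hφdiff.continuous
    fun_prop
  have hGnonneg : ∀ τ, 0 ≤ G τ := by
    intro τ
    rw [hG]
    positivity
  -- pointwise bound on the right ray
  have hexpsq : ∀ c τ : ℝ, Real.exp (γ * τ) * ((c * Real.exp (-γ * τ)) ^ 2 +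
      (c * Real.exp (-γ * τ)) ^ 2) = 2 * c ^ 2 * Real.exp (-γ * τ) := by
    intro c τ
    have h1 : Real.exp (γ * τ) * Real.exp (-γ * τ) = 1 := by
      rw [← Real.exp_add]
      norm_num
    nlinarith [Real.exp_pos (-γ * τ), Real.exp_pos (γ * τ)]
  have hright : IntegrableOn G (Set.Ioi R) := by
    have hmaj : IntegrableOn (fun τ : ℝ => 2 * C₁ ^ 2 * Real.exp (-γ * τ)) (Set.Ioi R) :=
      (exp_neg_integrableOn_Ioi R hγ).const_mul _
    refine hmaj.mono' hGcont.aestronglyMeasurable.restrict ?_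
    filter_upwards [MeasureTheory.ae_restrict_mem measurableSet_Ioi] with τ hτ
    have hτR : R ≤ τ := le_of_lt hτ
    obtain ⟨hb1, hb2⟩ := hrayR τ hτR
    rw [Real.norm_eq_abs, abs_of_nonneg (hGnonneg τ)]
    have habs : |τ| = τ := abs_of_nonneg (by linarith)
    rw [hG]
    simp only [habs]
    have h1 : (φ τ) ^ 2 ≤ (C₁ * Real.exp (-γ * τ)) ^ 2 := by
      apply pow_le_pow_left₀ (hφpos τ).le
      calc φ τ ≤ φ T * Real.exp (γ * (T + 1)) * Real.exp (-γ * τ) := hb1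
        _ = C₁ * Real.exp (-γ * τ) := by rw [hC₁]
    have h2 : (deriv φ τ) ^ 2 ≤ (C₁ * Real.exp (-γ * τ)) ^ 2 := by
      rw [← sq_abs]
      apply pow_le_pow_left₀ (abs_nonneg _)
      calc |deriv φ τ| ≤ φ T * Real.exp (γ * (T + 1)) * Real.exp (-γ * τ) := hb2
        _ = C₁ * Real.exp (-γ * τ) := by rw [hC₁]
    calc Real.exp (γ * τ) * ((φ τ) ^ 2 + (deriv φ τ) ^ 2)
        ≤ Real.exp (γ * τ) * ((C₁ * Real.exp (-γ * τ)) ^ 2 + (C₁ * Real.exp (-γ * τ)) ^ 2) :=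
          mul_le_mul_of_nonneg_left (add_le_add h1 h2) (Real.exp_pos _).le
      _ = 2 * C₁ ^ 2 * Real.exp (-γ * τ) := hexpsq C₁ τ
  -- pointwise bound on the left ray
  have hleft : IntegrableOn G (Set.Iio (-R)) := by
    have hmaj0 : IntegrableOn (fun τ : ℝ => 2 * C₂ ^ 2 * Real.exp (-γ * τ)) (Set.Ioi R) :=
      (exp_neg_integrableOn_Ioi R hγ).const_mul _
    have hmaj : IntegrableOn (fun τ : ℝ => 2 * C₂ ^ 2 * Real.exp (-γ * (-τ))) (Set.Iio (-R)) :=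
      integrableOn_comp_neg (g := fun τ : ℝ => 2 * C₂ ^ 2 * Real.exp (-γ * τ)) (c := R) hmaj0
    refine hmaj.mono' hGcont.aestronglyMeasurable.restrict ?_
    filter_upwards [MeasureTheory.ae_restrict_mem measurableSet_Iio] with τ hτ
    have hτR : R ≤ -τ := by
      have : τ < -R := hτ
      linarith
    obtain ⟨hb1, hb2⟩ := hrayL (-τ) hτR
    rw [Real.norm_eq_abs, abs_of_nonneg (hGnonneg τ)]
    have habs : |τ| = -τ := abs_of_nonpos (by linarith)
    rw [hG]
    simp only [habs]
    have hφτ : φ τ = ψ (-τ) := by rw [hψ]; norm_num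
    have hφ'τ : |deriv φ τ| = |ψ' (-τ)| := by
      rw [hψ']
      simp [abs_neg]
    have h1 : (φ τ) ^ 2 ≤ (C₂ * Real.exp (-γ * (-τ))) ^ 2 := by
      apply pow_le_pow_left₀ (hφpos τ).le
      rw [hφτ]
      calc ψ (-τ) ≤ ψ T * Real.exp (γ * (T + 1)) * Real.exp (-γ * (-τ)) := hb1
        _ = C₂ * Real.exp (-γ * (-τ)) := by rw [hC₂]
    have h2 : (deriv φ τ) ^ 2 ≤ (C₂ * Real.exp (-γ * (-τ))) ^ 2 := by
      rw [← sq_abs]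
      apply pow_le_pow_left₀ (abs_nonneg _)
      rw [hφ'τ]
      calc |ψ' (-τ)| ≤ ψ T * Real.exp (γ * (T + 1)) * Real.exp (-γ * (-τ)) := hb2
        _ = C₂ * Real.exp (-γ * (-τ)) := by rw [hC₂]
    calc Real.exp (γ * (-τ)) * ((φ τ) ^ 2 + (deriv φ τ) ^ 2)
        ≤ Real.exp (γ * (-τ)) * ((C₂ * Real.exp (-γ * (-τ))) ^ 2 +
            (C₂ * Real.exp (-γ * (-τ))) ^ 2) :=
          mul_le_mul_of_nonneg_left (add_le_add h1 h2) (Real.exp_pos _).le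
      _ = 2 * C₂ ^ 2 * Real.exp (-γ * (-τ)) := hexpsq C₂ (-τ)
  -- the middle part
  have hmid : IntegrableOn G (Set.Icc (-R) R) := hGcont.integrableOn_Icc
  -- assemble
  have hcover : (Set.univ : Set ℝ) ⊆ Set.Iio (-R) ∪ (Set.Icc (-R) R ∪ Set.Ioi R) := by
    intro x _
    rcases lt_or_ge x (-R) with h | h
    · exact Set.mem_union_left _ (Set.mem_Iio.mpr h)
    · rcases le_or_gt x R with h2 | h2
      · exact Set.mem_union_right _ (Set.mem_union_left _ ⟨h, h2⟩)
      · exact Set.mem_union_right _ (Set.mem_union_right _ (Set.mem_Ioi.mpr h2))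
  have hGint : Integrable G := by
    rw [← MeasureTheory.integrableOn_univ]
    exact ((hleft.union (hmid.union hright)).mono_set hcover)
  refine ⟨(∫ τ : ℝ, G τ) + 1, ?_, hGint, ?_⟩
  · have h0 : 0 ≤ ∫ τ : ℝ, G τ := MeasureTheory.integral_nonneg hGnonneg
    linarith
  · have : (∫ τ : ℝ, Real.exp (γ * |τ|) * ((φ τ) ^ 2 + (deriv φ τ) ^ 2)) = ∫ τ : ℝ, G τ := rfl
    linarith [this.le]

end MagStep
end
end

section
/- There exists a constant C > 0 (depending only on a, δ, M) such that for all h ∈ (0,h₀), all ξ ∈ ℝ, all κ ∈ [−M,M], and all u ∈ H¹₀(−h^{−δ}, h^{−δ}), the weighted quadratic form satisfies q_{a,ξ,κ,h}(u) ≥ (1 − C·h^{1/2−2δ})·q_a[ξ](u), where q_a[ξ](u) = ∫_ℝ (|u'(τ)|² + (ξ + b_a(τ)τ)²|u(τ)|²) dτ (u extended by zero outside (−h^{−δ}, h^{−δ})). -/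
/-!
Common setup for the formalization of
"Semiclassical eigenvalue estimates under magnetic steps" (Assaad–Helffer–Kachmar).
-/

noncomputable section

open MeasureTheory Set

namespace MagStep2
lemma pointwise_bound (dv ρ W e c θ₁ θp : ℝ) (hdv : 0 ≤ dv) (hρ : 0 ≤ ρ)
    (he : |e| ≤ θ₁) (hθ₁ : θ₁ ≤ 1/3) (hc : |c| ≤ θp / 2) :
    (1 - θ₁) * dv + (1 - 3*θ₁) * (W^2 * ρ) - (θp/2) * ((W^2 + 1) * ρ)
      ≤ (dv + (1 + 2*e) * (W - c)^2 * ρ) * (1 - e) := by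
  obtain ⟨h1, h2⟩ := abs_le.mp he
  have hθ₁0 : 0 ≤ θ₁ := le_trans (abs_nonneg e) he
  obtain ⟨hc1, hc2⟩ := abs_le.mp hc
  have hθp0 : 0 ≤ θp := by linarith [abs_nonneg c]
  have hd : (1 - θ₁) * dv ≤ dv * (1 - e) := by nlinarith
  have hcoef : 1 - 3*θ₁ ≤ (1 + 2*e) * (1 - e) := by nlinarith
  have hcoef0 : 0 ≤ 1 - 3*θ₁ := by linarith
  have hcoef1 : 1 - 3*θ₁ ≤ 1 := by linarith
  have hsq : (1 - 3*θ₁) * (W - c)^2 ≤ (1 + 2*e) * (1 - e) * (W - c)^2 :=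
    mul_le_mul_of_nonneg_right hcoef (sq_nonneg _)
  have habs : 2 * ((1 - 3*θ₁) * (c * W)) ≤ θp * |W| := by
    have h5 : (1 - 3*θ₁) * (c * W) ≤ |c * W| := by
      rcases le_or_gt 0 (c * W) with h | h
      · nlinarith [le_abs_self (c * W)]
      · calc (1 - 3*θ₁) * (c * W) ≤ 0 := by nlinarith
          _ ≤ |c * W| := abs_nonneg _
    have h6 : |c * W| ≤ (θp/2) * |W| := by
      rw [abs_mul]
      exact mul_le_mul_of_nonneg_right hc (abs_nonneg W)
    linarith
  have hW2 : θp * |W| ≤ (θp/2) * (W^2 + 1) := by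
    nlinarith [sq_nonneg (|W| - 1), sq_abs W, abs_nonneg W]
  have hmain : (1 - 3*θ₁) * W^2 - (θp/2) * (W^2 + 1) ≤ (1 - 3*θ₁) * (W - c)^2 := by
    nlinarith [mul_nonneg hcoef0 (sq_nonneg c)]
  nlinarith [mul_le_mul_of_nonneg_right hmain hρ, mul_le_mul_of_nonneg_right hsq hρ, hd]
end MagStep2

namespace MagStep3
open MeasureTheory Set

lemma final_arith (D P N q θ₁ x A K M : ℝ) (hD0 : 0 ≤ D) (hP0 : 0 ≤ P) (hN0 : 0 ≤ N)
    (hM : 0 < M) (hA0 : 0 < A) (hK2 : 2 ≤ K) (hx0 : 0 ≤ x)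
    (hθ₁0 : 0 ≤ θ₁) (hθ₁b : θ₁ ≤ M * x * A)
    (hN : N ≤ K * (D + P))
    (hq : (1 - θ₁) * D + (1 - 3 * θ₁) * P - (M * x) / 2 * (P + N) ≤ q) :
    (1 - (M * (3 * A + (K + 1) / 2) + 1) * x) * (D + P) ≤ q := by
  have hz1 := mul_le_mul_of_nonneg_right hθ₁b hD0
  have hz2 := mul_le_mul_of_nonneg_right hθ₁b hP0
  have hz3 := mul_le_mul_of_nonneg_left hN (by positivity : (0:ℝ) ≤ (M * x) / 2)
  nlinarith [mul_nonneg hx0 hD0, mul_nonneg hx0 hP0,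
    mul_nonneg (mul_nonneg hM.le hx0) hD0, mul_nonneg (mul_nonneg hM.le hx0) hP0,
    mul_nonneg (mul_nonneg (mul_nonneg hM.le hA0.le) hx0) hD0,
    mul_nonneg (mul_nonneg (mul_nonneg hM.le hA0.le) hx0) hP0]

end MagStep3

namespace MagStep

lemma bmul_eq (a : ℝ) : (fun τ : ℝ => bStep a τ * τ) = fun τ => max τ 0 + a * min τ 0 := by
  funext τ
  unfold bStep
  rcases le_or_gt 0 τ with h | h
  · rw [if_pos h, max_eq_left h, min_eq_right h]; ring
  · rw [if_neg (not_le.mpr h), max_eq_right h.le, min_eq_left h.le]; ring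

lemma continuous_bmul (a : ℝ) : Continuous (fun τ : ℝ => bStep a τ * τ) := by
  rw [bmul_eq]
  exact (continuous_id.max continuous_const).add
    (continuous_const.mul (continuous_id.min continuous_const))

lemma abs_bStep_le (a τ : ℝ) (ha1 : -1 < a) (ha2 : a < 0) : |bStep a τ| ≤ 1 := by
  unfold bStep
  split_ifs <;> rw [abs_le] <;> constructor <;> linarith

/-- Agmon-type sup bound. -/
lemma agmon (u : ℝ → ℂ) (hu : ContDiff ℝ 1 u) (hcs : HasCompactSupport u)
    (t : ℝ) (ht : 0 < t) (x₀ : ℝ) :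
    ‖u x₀‖ ^ 2 ≤ ∫ τ : ℝ, (t * ‖u τ‖ ^ 2 + ‖deriv u τ‖ ^ 2 / t) := by
  have hud : Differentiable ℝ u := hu.differentiable one_ne_zero
  have hcd : Continuous (deriv u) := hu.continuous_deriv le_rfl
  have hnorm : ∀ z : ℂ, ‖z‖ ^ 2 = z.re * z.re + z.im * z.im := by
    intro z
    rw [Complex.sq_norm, Complex.normSq_apply]
  set g : ℝ → ℝ := fun τ => t * ‖u τ‖ ^ 2 + ‖deriv u τ‖ ^ 2 / t with hg
  have hgz : ∀ x ∉ tsupport u, g x = 0 := by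
    intro x hx
    have h1 : u x = 0 := image_eq_zero_of_notMem_tsupport hx
    have h2 : deriv u x = 0 := by
      by_contra h
      exact hx (support_deriv_subset (by simpa [Function.mem_support] using h))
    simp [hg, h1, h2]
  have hgcs : HasCompactSupport g := HasCompactSupport.intro hcs hgz
  have hgcont : Continuous g :=
    ((continuous_const.mul ((hu.continuous.norm).pow 2)).add
      (((hcd.norm).pow 2).div_const t))
  have hgint : Integrable g := hgcont.integrable_of_hasCompactSupport hgcs
  have hgnn : ∀ τ, 0 ≤ g τ := fun τ => by positivity
  by_cases hx₀ : x₀ ∈ tsupport u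
  · obtain ⟨r, hr⟩ := hcs.isBounded.subset_closedBall 0
    set b : ℝ := -(|r| + 1) with hb
    have hbx : b ≤ x₀ := by
      have := hr hx₀
      rw [Metric.mem_closedBall, Real.dist_eq, sub_zero] at this
      have : -r ≤ x₀ := by cases abs_le.mp this; linarith
      have : -|r| ≤ x₀ := le_trans (by simp [neg_le_neg_iff, le_abs_self]) this
      simp only [hb]; linarith
    have hbn : b ∉ tsupport u := by
      intro hmem
      have := hr hmem
      rw [Metric.mem_closedBall, Real.dist_eq, sub_zero] at this
      have h2 : |b| ≤ r := this
      rw [hb, abs_neg, abs_of_nonneg (by positivity)] at h2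
      have : r ≤ |r| := le_abs_self r
      linarith
    -- derivative formula
    set f' : ℝ → ℝ := fun τ =>
      2 * ((u τ).re * (deriv u τ).re + (u τ).im * (deriv u τ).im) with hf'
    have key : ∀ τ : ℝ, HasDerivAt (fun s => ‖u s‖ ^ 2) (f' τ) τ := by
      intro τ
      have h1 : HasDerivAt u (deriv u τ) τ := (hud τ).hasDerivAt
      have hre : HasDerivAt (fun s => (u s).re) ((deriv u τ).re) τ :=
        (Complex.reCLM.hasFDerivAt.comp_hasDerivAt τ h1)
      have him : HasDerivAt (fun s => (u s).im) ((deriv u τ).im) τ :=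
        (Complex.imCLM.hasFDerivAt.comp_hasDerivAt τ h1)
      have := (hre.mul hre).add (him.mul him)
      have heq : (fun s => (u s).re * (u s).re + (u s).im * (u s).im)
          = fun s => ‖u s‖ ^ 2 := by
        funext s; rw [hnorm]
      replace this : HasDerivAt (fun s => (u s).re * (u s).re + (u s).im * (u s).im) _ τ := this
      rw [heq] at this
      convert this using 1
      rw [hf']; ring
    have hf'cont : Continuous f' :=
      continuous_const.mul
        (((Complex.continuous_re.comp hu.continuous).mul
            (Complex.continuous_re.comp hcd)).add
          ((Complex.continuous_im.comp hu.continuous).mul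
            (Complex.continuous_im.comp hcd)))
    have ftc : ∫ y in b..x₀, f' y = ‖u x₀‖ ^ 2 - ‖u b‖ ^ 2 :=
      intervalIntegral.integral_eq_sub_of_hasDerivAt (fun x _ => key x)
        (hf'cont.intervalIntegrable _ _)
    have hub : u b = 0 := image_eq_zero_of_notMem_tsupport hbn
    have hstep : ∀ τ ∈ Icc b x₀, f' τ ≤ g τ := by
      intro τ _
      have e1 : ‖u τ‖ ^ 2 = (u τ).re ^ 2 + (u τ).im ^ 2 := by rw [hnorm]; ring
      have e2 : ‖deriv u τ‖ ^ 2 = (deriv u τ).re ^ 2 + (deriv u τ).im ^ 2 := by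
        rw [hnorm]; ring
      have h3 : 2 * t * ((u τ).re * (deriv u τ).re + (u τ).im * (deriv u τ).im)
          ≤ t ^ 2 * ((u τ).re ^ 2 + (u τ).im ^ 2)
            + ((deriv u τ).re ^ 2 + (deriv u τ).im ^ 2) := by
        nlinarith [sq_nonneg (t * (u τ).re - (deriv u τ).re),
          sq_nonneg (t * (u τ).im - (deriv u τ).im)]
      have ht' : t ≠ 0 := ne_of_gt ht
      have h4 := div_le_div_of_nonneg_right h3 ht.le
      have e3 : (2 * t * ((u τ).re * (deriv u τ).re + (u τ).im * (deriv u τ).im)) / t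
          = f' τ := by rw [hf']; field_simp
      have e4 : (t ^ 2 * ((u τ).re ^ 2 + (u τ).im ^ 2)
            + ((deriv u τ).re ^ 2 + (deriv u τ).im ^ 2)) / t
          = t * ((u τ).re ^ 2 + (u τ).im ^ 2)
            + ((deriv u τ).re ^ 2 + (deriv u τ).im ^ 2) / t := by
        field_simp
      rw [e3, e4] at h4
      calc f' τ ≤ t * ((u τ).re ^ 2 + (u τ).im ^ 2)
            + ((deriv u τ).re ^ 2 + (deriv u τ).im ^ 2) / t := h4
        _ = g τ := by simp only [hg, e1, e2]
    have step1 : ∫ y in b..x₀, f' y ≤ ∫ y in b..x₀, g y :=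
      intervalIntegral.integral_mono_on hbx (hf'cont.intervalIntegrable _ _)
        (hgcont.intervalIntegrable _ _) hstep
    have step2 : ∫ y in b..x₀, g y ≤ ∫ y : ℝ, g y := by
      rw [intervalIntegral.integral_of_le hbx]
      exact setIntegral_le_integral hgint (Filter.Eventually.of_forall hgnn)
    have : ‖u x₀‖ ^ 2 = ∫ y in b..x₀, f' y := by
      rw [ftc, hub]; simp
    rw [this]
    exact le_trans step1 step2
  · have h1 : u x₀ = 0 := image_eq_zero_of_notMem_tsupport hx₀
    rw [h1]
    simpa using integral_nonneg hgnn

end MagStep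
-- continuation: l2_bound
namespace MagStep
open MeasureTheory Set

lemma l2_bound (a ξ : ℝ) (ha1 : -1 < a) (ha2 : a < 0) (u : ℝ → ℂ)
    (hu : ContDiff ℝ 1 u) (hcs : HasCompactSupport u) :
    (∫ τ : ℝ, ‖u τ‖ ^ 2) ≤ (4 * (2 + 2 / (-a)) ^ 2 + 2) *
      ((∫ τ : ℝ, ‖deriv u τ‖ ^ 2) + ∫ τ : ℝ, fiberPot a ξ τ * ‖u τ‖ ^ 2) := by
  have ha0 : (0:ℝ) < -a := by linarith
  set S₀ : ℝ := 2 + 2 / (-a) with hS₀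
  have hS₀pos : 0 < S₀ := by positivity
  set t : ℝ := 1 / (2 * S₀) with htdef
  have ht : 0 < t := by positivity
  set N : ℝ := ∫ τ : ℝ, ‖u τ‖ ^ 2 with hN
  set D : ℝ := ∫ τ : ℝ, ‖deriv u τ‖ ^ 2 with hD
  set P : ℝ := ∫ τ : ℝ, fiberPot a ξ τ * ‖u τ‖ ^ 2 with hP
  -- integrability
  have hucont : Continuous u := hu.continuous
  have hcd : Continuous (deriv u) := hu.continuous_deriv le_rfl
  have hρcont : Continuous (fun τ : ℝ => ‖u τ‖ ^ 2) := (hucont.norm).pow 2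
  have hρz : ∀ x ∉ tsupport u, ‖u x‖ ^ 2 = 0 := fun x hx => by
    rw [image_eq_zero_of_notMem_tsupport hx]; simp
  have hdz : ∀ x ∉ tsupport u, ‖deriv u x‖ ^ 2 = 0 := fun x hx => by
    have : deriv u x = 0 := by
      by_contra h
      exact hx (support_deriv_subset (by simpa [Function.mem_support] using h))
    rw [this]; simp
  have hρint : Integrable (fun τ : ℝ => ‖u τ‖ ^ 2) :=
    hρcont.integrable_of_hasCompactSupport (HasCompactSupport.intro hcs hρz)
  have hdint : Integrable (fun τ : ℝ => ‖deriv u τ‖ ^ 2) :=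
    ((hcd.norm).pow 2).integrable_of_hasCompactSupport (HasCompactSupport.intro hcs hdz)
  have hVcont : Continuous (fun τ : ℝ => fiberPot a ξ τ) := by
    unfold fiberPot
    exact (continuous_const.add (continuous_bmul a)).pow 2
  have hPint : Integrable (fun τ : ℝ => fiberPot a ξ τ * ‖u τ‖ ^ 2) :=
    (hVcont.mul hρcont).integrable_of_hasCompactSupport
      (HasCompactSupport.intro hcs (fun x hx => by show fiberPot a ξ x * ‖u x‖ ^ 2 = 0; rw [hρz x hx, mul_zero]))
  have hN0 : 0 ≤ N := integral_nonneg (fun τ => by positivity)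
  have hD0 : 0 ≤ D := integral_nonneg (fun τ => by positivity)
  have hP0 : 0 ≤ P := integral_nonneg (fun τ => by
    have : 0 ≤ fiberPot a ξ τ := sq_nonneg _
    positivity)
  set B : ℝ := t * N + D / t with hB
  have hB0 : 0 ≤ B := by positivity
  -- Agmon bound
  have hagmon : ∀ τ : ℝ, ‖u τ‖ ^ 2 ≤ B := by
    intro τ
    refine le_trans (agmon u hu hcs t ht τ) (le_of_eq ?_)
    rw [integral_add (hρint.const_mul t) (hdint.div_const t), hB]
    rw [integral_const_mul, integral_div]
  -- the two intervals
  set J₁ : Set ℝ := Icc (-1 - ξ) (1 - ξ) with hJ₁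
  set J₂ : Set ℝ := Icc ((1 - ξ) / a) ((-1 - ξ) / a) with hJ₂
  -- pointwise bound
  have hpt : ∀ τ : ℝ, ‖u τ‖ ^ 2 ≤ fiberPot a ξ τ * ‖u τ‖ ^ 2
      + J₁.indicator (fun _ => B) τ + J₂.indicator (fun _ => B) τ := by
    intro τ
    have hind1 : 0 ≤ J₁.indicator (fun _ => B) τ := Set.indicator_nonneg (fun _ _ => hB0) τ
    have hind2 : 0 ≤ J₂.indicator (fun _ => B) τ := Set.indicator_nonneg (fun _ _ => hB0) τ
    rcases le_or_gt 1 (fiberPot a ξ τ) with hV | hV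
    · have : ‖u τ‖ ^ 2 ≤ fiberPot a ξ τ * ‖u τ‖ ^ 2 :=
        le_mul_of_one_le_left (by positivity) hV
      linarith
    · have hVnn : 0 ≤ fiberPot a ξ τ * ‖u τ‖ ^ 2 := by
        have : (0:ℝ) ≤ fiberPot a ξ τ := sq_nonneg _
        positivity
      rcases le_or_gt 0 τ with hτ | hτ
      · have hb : bStep a τ = 1 := if_pos hτ
        have habs : (ξ + τ) ^ 2 < 1 := by
          have : fiberPot a ξ τ = (ξ + τ) ^ 2 := by unfold fiberPot; rw [hb]; ring
          linarith [this ▸ hV]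
        have h1 : |ξ + τ| < 1 := (sq_lt_one_iff_abs_lt_one _).mp habs
        rw [abs_lt] at h1
        have hmem : τ ∈ J₁ := by
          rw [hJ₁]; constructor <;> [linarith [h1.1]; linarith [h1.2]]
        rw [Set.indicator_of_mem hmem]
        linarith [hagmon τ]
      · have hb : bStep a τ = a := if_neg (not_le.mpr hτ)
        have habs : (ξ + a * τ) ^ 2 < 1 := by
          have : fiberPot a ξ τ = (ξ + a * τ) ^ 2 := by unfold fiberPot; rw [hb]
          linarith [this ▸ hV]
        have h1 : |ξ + a * τ| < 1 := (sq_lt_one_iff_abs_lt_one _).mp habs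
        rw [abs_lt] at h1
        have hmem : τ ∈ J₂ := by
          rw [hJ₂]
          constructor
          · rw [div_le_iff_of_neg ha2]; linarith [h1.2]
          · rw [le_div_iff_of_neg ha2]; linarith [h1.1]
        rw [Set.indicator_of_mem hmem]
        linarith [hagmon τ]
    -- integrate
  have hmeas1 : MeasurableSet J₁ := measurableSet_Icc
  have hmeas2 : MeasurableSet J₂ := measurableSet_Icc
  have hind1int : Integrable (J₁.indicator (fun _ => B)) :=
    (integrable_indicator_iff hmeas1).mpr
      (integrableOn_const measure_Icc_lt_top.ne enorm_ne_top)
  have hind2int : Integrable (J₂.indicator (fun _ => B)) :=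
    (integrable_indicator_iff hmeas2).mpr
      (integrableOn_const measure_Icc_lt_top.ne enorm_ne_top)
  have hRint : Integrable (fun τ : ℝ => fiberPot a ξ τ * ‖u τ‖ ^ 2
      + J₁.indicator (fun _ => B) τ + J₂.indicator (fun _ => B) τ) :=
    (hPint.add hind1int).add hind2int
  have hle : N ≤ P + (volume J₁).toReal * B + (volume J₂).toReal * B := by
    have hmono : N ≤ ∫ τ : ℝ, (fiberPot a ξ τ * ‖u τ‖ ^ 2
        + J₁.indicator (fun _ => B) τ + J₂.indicator (fun _ => B) τ) :=
      integral_mono hρint hRint hpt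
    have e2 : (∫ τ : ℝ, (fiberPot a ξ τ * ‖u τ‖ ^ 2 + J₁.indicator (fun _ => B) τ))
        = (∫ τ : ℝ, fiberPot a ξ τ * ‖u τ‖ ^ 2) + ∫ τ : ℝ, J₁.indicator (fun _ => B) τ :=
      integral_add hPint hind1int
    have e1 : (∫ τ : ℝ, (fiberPot a ξ τ * ‖u τ‖ ^ 2
        + J₁.indicator (fun _ => B) τ + J₂.indicator (fun _ => B) τ))
        = (∫ τ : ℝ, (fiberPot a ξ τ * ‖u τ‖ ^ 2 + J₁.indicator (fun _ => B) τ))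
          + ∫ τ : ℝ, J₂.indicator (fun _ => B) τ :=
      integral_add (hPint.add hind1int) hind2int
    have e3 : (∫ τ : ℝ, J₁.indicator (fun _ => B) τ) = (volume J₁).toReal * B := by
      rw [integral_indicator_const B hmeas1, smul_eq_mul]; rfl
    have e4 : (∫ τ : ℝ, J₂.indicator (fun _ => B) τ) = (volume J₂).toReal * B := by
      rw [integral_indicator_const B hmeas2, smul_eq_mul]; rfl
    rw [e1, e2, e3, e4] at hmono
    linarith [hmono]
  have hv1 : (volume J₁).toReal = 2 := by
    rw [hJ₁, Real.volume_Icc]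
    rw [ENNReal.toReal_ofReal (by linarith)]
    ring
  have hv2 : (volume J₂).toReal = 2 / (-a) := by
    rw [hJ₂, Real.volume_Icc]
    have hne : a ≠ 0 := ne_of_lt ha2
    have h5 : (-1 - ξ) / a - (1 - ξ) / a = 2 / (-a) := by
      field_simp
      ring
    rw [h5, ENNReal.toReal_ofReal (by positivity)]
  rw [hv1, hv2] at hle
  -- arithmetic
  have hBe : S₀ * B = N / 2 + 2 * S₀ ^ 2 * D := by
    rw [hB, htdef]
    field_simp
  have hfin : N ≤ P + N / 2 + 2 * S₀ ^ 2 * D := by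
    have h2 : 2 * B + 2 / (-a) * B = S₀ * B := by rw [hS₀]; ring
    calc N ≤ P + 2 * B + 2 / (-a) * B := by linarith
      _ = P + S₀ * B := by linarith
      _ = P + (N / 2 + 2 * S₀ ^ 2 * D) := by rw [hBe]
      _ = P + N / 2 + 2 * S₀ ^ 2 * D := by ring
  have hS2 : 0 ≤ S₀ ^ 2 := sq_nonneg _
  clear_value S₀ t N D P B
  have : N ≤ (4 * S₀ ^ 2 + 2) * (D + P) := by
    linarith [hfin, mul_nonneg hS2 hP0, mul_nonneg hS2 hD0]
  exact this

/-- **Equation (3.8)** (comparison of the weighted and flat 1D quadratic forms).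
There exists `C > 0` (depending only on `a, δ, M`) such that for all `h ∈ (0,h₀)`,
`ξ ∈ ℝ`, `κ ∈ [−M,M]` and all `u ∈ H¹₀(−h^{−δ},h^{−δ})` (extended by zero):
`q_{a,ξ,κ,h}(u) ≥ (1 − C h^{1/2−2δ}) q_a[ξ](u)`. -/
theorem weighted_form_lower_bound (a δ M h₀ : ℝ)
    (ha : a ∈ Set.Ioo (-1 : ℝ) 0) (hδ : δ ∈ Set.Ioo (0 : ℝ) (1/12))
    (hM : 0 < M) (hh₀ : 0 < h₀) (hMh₀ : M * h₀ ^ ((1:ℝ)/2 - δ) < 1/3) :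
    ∃ C > (0 : ℝ), ∀ h : ℝ, h ∈ Set.Ioo (0 : ℝ) h₀ → ∀ ξ : ℝ, ∀ κ ∈ Set.Icc (-M) M,
      ∀ u : ℝ → ℂ, dirichletCore (h ^ (-δ)) u →
        (1 - C * h ^ ((1:ℝ)/2 - 2 * δ)) * fiberForm a ξ u ≤ qWeight1D a ξ κ h δ u := by
  obtain ⟨ha1, ha2⟩ := ha
  obtain ⟨hδ1, hδ2⟩ := hδ
  set K : ℝ := 4 * (2 + 2 / (-a)) ^ 2 + 2 with hKdef
  have ha0 : (0:ℝ) < -a := by linarith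
  have hK2 : 2 ≤ K := by
    rw [hKdef]
    linarith [sq_nonneg (2 + 2 / (-a))]
  set A : ℝ := h₀ ^ δ with hAdef
  have hA0 : 0 < A := Real.rpow_pos_of_pos hh₀ δ
  refine ⟨M * (3 * A + (K + 1) / 2) + 1, ?_, ?_⟩
  · rw [hKdef, hAdef]
    have h2 : (0:ℝ) ≤ (2 + 2 / (-a)) ^ 2 := sq_nonneg _
    have h3 : (0:ℝ) ≤ h₀ ^ δ := Real.rpow_nonneg hh₀.le _
    nlinarith [mul_nonneg hM.le
      (show (0:ℝ) ≤ 3 * h₀ ^ δ + (4 * (2 + 2 / (-a)) ^ 2 + 2 + 1) / 2 by linarith)]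
  intro h hh ξ κ hκ u hcore
  obtain ⟨hh1, hh2⟩ := hh
  obtain ⟨hu1, hu2, hu3⟩ := hcore
  set L : ℝ := h ^ (-δ) with hLdef
  have hL0 : 0 < L := Real.rpow_pos_of_pos hh1 _
  have hhalf : (0:ℝ) ≤ h ^ ((1:ℝ)/2) := Real.rpow_nonneg hh1.le _
  -- rpow identities
  have hid1 : h ^ ((1:ℝ)/2) * L = h ^ ((1:ℝ)/2 - δ) := by
    rw [hLdef, ← Real.rpow_add hh1]
    congr 1 <;> ring
  have hL2 : L ^ 2 = h ^ (-δ * 2) := by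
    rw [hLdef, ← Real.rpow_natCast (h ^ (-δ)) 2, ← Real.rpow_mul hh1.le]
    norm_num
  have hid2 : h ^ ((1:ℝ)/2) * L ^ 2 = h ^ ((1:ℝ)/2 - 2 * δ) := by
    rw [hL2, ← Real.rpow_add hh1]
    congr 1 <;> ring
  have hsplit : h ^ ((1:ℝ)/2 - δ) = h ^ ((1:ℝ)/2 - 2 * δ) * h ^ δ := by
    rw [← Real.rpow_add hh1]
    congr 1 <;> ring
  have hδh : h ^ δ ≤ A := by
    rw [hAdef]; exact Real.rpow_le_rpow hh1.le hh2.le hδ1.le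
  have hκM : |κ| ≤ M := abs_le.mpr ⟨hκ.1, hκ.2⟩
  -- constants
  set θ₁ : ℝ := M * h ^ ((1:ℝ)/2 - δ) with hθ₁def
  set θp : ℝ := M * h ^ ((1:ℝ)/2 - 2 * δ) with hθpdef
  have hθ₁0 : 0 ≤ θ₁ := mul_nonneg hM.le (Real.rpow_nonneg hh1.le _)
  have hθ₁third : θ₁ ≤ 1/3 := by
    have h5 : h ^ ((1:ℝ)/2 - δ) ≤ h₀ ^ ((1:ℝ)/2 - δ) :=
      Real.rpow_le_rpow hh1.le hh2.le (by linarith)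
    calc θ₁ ≤ M * h₀ ^ ((1:ℝ)/2 - δ) := mul_le_mul_of_nonneg_left h5 hM.le
      _ ≤ 1/3 := hMh₀.le
  have hx0 : (0:ℝ) ≤ h ^ ((1:ℝ)/2 - 2 * δ) := Real.rpow_nonneg hh1.le _
  have hθ₁b : θ₁ ≤ M * h ^ ((1:ℝ)/2 - 2 * δ) * A := by
    rw [hθ₁def, hsplit]
    calc M * (h ^ ((1:ℝ)/2 - 2*δ) * h ^ δ) ≤ M * (h ^ ((1:ℝ)/2 - 2*δ) * A) := by
          apply mul_le_mul_of_nonneg_left (mul_le_mul_of_nonneg_left hδh hx0) hM.le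
      _ = M * h ^ ((1:ℝ)/2 - 2*δ) * A := by ring
  -- integrability quantities
  have hucont : Continuous u := hu1.continuous
  have hcd : Continuous (deriv u) := hu1.continuous_deriv le_rfl
  have hρcont : Continuous (fun τ : ℝ => ‖u τ‖ ^ 2) := (hucont.norm).pow 2
  have hdcont : Continuous (fun τ : ℝ => ‖deriv u τ‖ ^ 2) := (hcd.norm).pow 2
  have hρz : ∀ x ∉ tsupport u, ‖u x‖ ^ 2 = 0 := fun x hx => by
    rw [image_eq_zero_of_notMem_tsupport hx]; simp
  have hdz : ∀ x ∉ tsupport u, ‖deriv u x‖ ^ 2 = 0 := fun x hx => by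
    have : deriv u x = 0 := by
      by_contra hcon
      exact hx (support_deriv_subset (by simpa [Function.mem_support] using hcon))
    rw [this]; simp
  have hρint : Integrable (fun τ : ℝ => ‖u τ‖ ^ 2) :=
    hρcont.integrable_of_hasCompactSupport (HasCompactSupport.intro hu2 hρz)
  have hdint : Integrable (fun τ : ℝ => ‖deriv u τ‖ ^ 2) :=
    hdcont.integrable_of_hasCompactSupport (HasCompactSupport.intro hu2 hdz)
  have hmc : Continuous (fun τ : ℝ => bStep a τ * τ) := continuous_bmul a
  have hVcont : Continuous (fun τ : ℝ => fiberPot a ξ τ) := by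
    unfold fiberPot
    exact (continuous_const.add hmc).pow 2
  have hPint : Integrable (fun τ : ℝ => fiberPot a ξ τ * ‖u τ‖ ^ 2) :=
    (hVcont.mul hρcont).integrable_of_hasCompactSupport
      (HasCompactSupport.intro hu2 (fun x hx => by show fiberPot a ξ x * ‖u x‖ ^ 2 = 0; rw [hρz x hx, mul_zero]))
  set D : ℝ := ∫ τ : ℝ, ‖deriv u τ‖ ^ 2 with hD
  set N : ℝ := ∫ τ : ℝ, ‖u τ‖ ^ 2 with hN
  set P : ℝ := ∫ τ : ℝ, fiberPot a ξ τ * ‖u τ‖ ^ 2 with hP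
  have hD0 : 0 ≤ D := integral_nonneg (fun τ => by positivity)
  have hN0 : 0 ≤ N := integral_nonneg (fun τ => by positivity)
  have hP0 : 0 ≤ P := integral_nonneg (fun τ => by
    have : (0:ℝ) ≤ fiberPot a ξ τ := sq_nonneg _
    positivity)
  have hFF : fiberForm a ξ u = D + P := by
    unfold fiberForm
    exact integral_add hdint hPint
  have hNK : N ≤ K * (D + P) := l2_bound a ξ ha1 ha2 u hu1 hu2
  -- the two integrands
  set Qf : ℝ → ℝ := fun τ =>
    (‖deriv u τ‖ ^ 2 +
        (1 + 2 * κ * h ^ ((1:ℝ)/2) * τ) *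
          (bStep a τ * τ + ξ - κ * h ^ ((1:ℝ)/2) * bStep a τ * τ ^ 2 / 2) ^ 2 *
          ‖u τ‖ ^ 2) *
      (1 - κ * h ^ ((1:ℝ)/2) * τ) with hQfdef
  set Rf : ℝ → ℝ := fun τ =>
    (1 - θ₁) * ‖deriv u τ‖ ^ 2 + (1 - 3 * θ₁) * (fiberPot a ξ τ * ‖u τ‖ ^ 2)
      - θp / 2 * (fiberPot a ξ τ * ‖u τ‖ ^ 2 + ‖u τ‖ ^ 2) with hRfdef
  have hqW : qWeight1D a ξ κ h δ u = ∫ τ in Set.Ioo (-L) L, Qf τ := rfl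
  -- continuity of Qf
  have hQf_eq : Qf = fun τ =>
      (‖deriv u τ‖ ^ 2 +
        (1 + 2 * κ * h ^ ((1:ℝ)/2) * τ) *
          ((bStep a τ * τ) + ξ - κ * h ^ ((1:ℝ)/2) / 2 * ((bStep a τ * τ) * τ)) ^ 2 *
          ‖u τ‖ ^ 2) *
      (1 - κ * h ^ ((1:ℝ)/2) * τ) := by
    funext τ
    rw [hQfdef]
    ring
  have hQcont : Continuous Qf := by
    rw [hQf_eq]
    have c0 : Continuous fun τ : ℝ => 1 + 2 * κ * h ^ ((1:ℝ)/2) * τ :=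
      continuous_const.add (continuous_const.mul continuous_id')
    have c1 : Continuous fun τ : ℝ =>
        (bStep a τ * τ) + ξ - κ * h ^ ((1:ℝ)/2) / 2 * ((bStep a τ * τ) * τ) :=
      (hmc.add continuous_const).sub (continuous_const.mul (hmc.mul continuous_id'))
    have c2 : Continuous fun τ : ℝ => 1 - κ * h ^ ((1:ℝ)/2) * τ :=
      continuous_const.sub (continuous_const.mul continuous_id')
    exact (hdcont.add ((c0.mul (c1.pow 2)).mul hρcont)).mul c2
  have hRcont : Continuous Rf := by
    rw [hRfdef]
    exact ((continuous_const.mul hdcont).add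
      (continuous_const.mul (hVcont.mul hρcont))).sub
      (continuous_const.mul ((hVcont.mul hρcont).add hρcont))
  have hQint : IntegrableOn Qf (Set.Ioo (-L) L) :=
    (hQcont.integrableOn_Icc).mono_set Set.Ioo_subset_Icc_self
  have hRint : IntegrableOn Rf (Set.Ioo (-L) L) :=
    (hRcont.integrableOn_Icc).mono_set Set.Ioo_subset_Icc_self
  -- pointwise comparison on Ioo
  have hpt : ∀ τ ∈ Set.Ioo (-L) L, Rf τ ≤ Qf τ := by
    intro τ hτ
    obtain ⟨hτ1, hτ2⟩ := hτ
    have hτabs : |τ| ≤ L := abs_le.mpr ⟨by linarith, hτ2.le⟩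
    have hτsq : τ ^ 2 ≤ L ^ 2 := sq_le_sq' (by linarith) hτ2.le
    have hbs : |bStep a τ| ≤ 1 := abs_bStep_le a τ ha1 ha2
    have he : |κ * h ^ ((1:ℝ)/2) * τ| ≤ θ₁ := by
      rw [abs_mul, abs_mul, abs_of_nonneg hhalf, hθ₁def, ← hid1]
      calc |κ| * h ^ ((1:ℝ)/2) * |τ| ≤ M * h ^ ((1:ℝ)/2) * L := by
            gcongr
        _ = M * (h ^ ((1:ℝ)/2) * L) := by ring
    have hc : |κ * h ^ ((1:ℝ)/2) * bStep a τ * τ ^ 2 / 2| ≤ θp / 2 := by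
      rw [abs_div, abs_mul, abs_mul, abs_mul, abs_of_nonneg hhalf,
        abs_of_nonneg (sq_nonneg τ), abs_two, hθpdef, ← hid2]
      calc |κ| * h ^ ((1:ℝ)/2) * |bStep a τ| * τ ^ 2 / 2
          ≤ M * h ^ ((1:ℝ)/2) * 1 * L ^ 2 / 2 := by gcongr
        _ = M * (h ^ ((1:ℝ)/2) * L ^ 2) / 2 := by ring
    have hpb := MagStep2.pointwise_bound (‖deriv u τ‖ ^ 2) (‖u τ‖ ^ 2)
      (bStep a τ * τ + ξ) (κ * h ^ ((1:ℝ)/2) * τ)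
      (κ * h ^ ((1:ℝ)/2) * bStep a τ * τ ^ 2 / 2) θ₁ θp
      (by positivity) (by positivity) he hθ₁third hc
    calc Rf τ = (1 - θ₁) * ‖deriv u τ‖ ^ 2
          + (1 - 3 * θ₁) * ((bStep a τ * τ + ξ) ^ 2 * ‖u τ‖ ^ 2)
          - θp / 2 * (((bStep a τ * τ + ξ) ^ 2 + 1) * ‖u τ‖ ^ 2) := by
          rw [hRfdef]; unfold fiberPot; ring
      _ ≤ (‖deriv u τ‖ ^ 2 + (1 + 2 * (κ * h ^ ((1:ℝ)/2) * τ)) *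
            ((bStep a τ * τ + ξ) - κ * h ^ ((1:ℝ)/2) * bStep a τ * τ ^ 2 / 2) ^ 2 *
            ‖u τ‖ ^ 2) * (1 - κ * h ^ ((1:ℝ)/2) * τ) := hpb
      _ = Qf τ := by rw [hQfdef]; ring
  have hmono : ∫ τ in Set.Ioo (-L) L, Rf τ ≤ ∫ τ in Set.Ioo (-L) L, Qf τ :=
    setIntegral_mono_on hRint hQint measurableSet_Ioo hpt
  -- evaluate ∫ Rf
  have hRzero : ∀ x ∉ Set.Ioo (-L) L, Rf x = 0 := by
    intro x hx
    have hxs : x ∉ tsupport u := fun hmem => hx (hu3 hmem)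
    simp only [hRfdef]
    rw [hρz x hxs, hdz x hxs]
    ring
  have hRval : ∫ τ in Set.Ioo (-L) L, Rf τ
      = (1 - θ₁) * D + (1 - 3 * θ₁) * P - θp / 2 * (P + N) := by
    rw [setIntegral_eq_integral_of_forall_compl_eq_zero hRzero]
    have e1 : (∫ τ : ℝ, Rf τ)
        = (∫ τ : ℝ, ((1 - θ₁) * ‖deriv u τ‖ ^ 2
            + (1 - 3 * θ₁) * (fiberPot a ξ τ * ‖u τ‖ ^ 2)))
          - ∫ τ : ℝ, θp / 2 * (fiberPot a ξ τ * ‖u τ‖ ^ 2 + ‖u τ‖ ^ 2) :=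
      integral_sub ((hdint.const_mul _).add (hPint.const_mul _))
        ((hPint.add hρint).const_mul _)
    have e2 : (∫ τ : ℝ, ((1 - θ₁) * ‖deriv u τ‖ ^ 2
          + (1 - 3 * θ₁) * (fiberPot a ξ τ * ‖u τ‖ ^ 2)))
        = (∫ τ : ℝ, (1 - θ₁) * ‖deriv u τ‖ ^ 2)
          + ∫ τ : ℝ, (1 - 3 * θ₁) * (fiberPot a ξ τ * ‖u τ‖ ^ 2) :=
      integral_add (hdint.const_mul _) (hPint.const_mul _)
    have e3 : (∫ τ : ℝ, (1 - θ₁) * ‖deriv u τ‖ ^ 2) = (1 - θ₁) * D :=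
      integral_const_mul _ _
    have e4 : (∫ τ : ℝ, (1 - 3 * θ₁) * (fiberPot a ξ τ * ‖u τ‖ ^ 2)) = (1 - 3 * θ₁) * P :=
      integral_const_mul _ _
    have e5 : (∫ τ : ℝ, θp / 2 * (fiberPot a ξ τ * ‖u τ‖ ^ 2 + ‖u τ‖ ^ 2))
        = θp / 2 * (P + N) := by
      rw [integral_const_mul]
      congr 1
      exact integral_add hPint hρint
    rw [e1, e2, e3, e4, e5]
  -- final assembly
  have hq : (1 - θ₁) * D + (1 - 3 * θ₁) * P - θp / 2 * (P + N)
      ≤ qWeight1D a ξ κ h δ u := by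
    rw [hqW, ← hRval]
    exact hmono
  rw [hθpdef] at hq
  have hq' : (1 - θ₁) * D + (1 - 3 * θ₁) * P
      - (M * h ^ ((1:ℝ)/2 - 2 * δ)) / 2 * (P + N) ≤ qWeight1D a ξ κ h δ u := by
    calc (1 - θ₁) * D + (1 - 3 * θ₁) * P
        - (M * h ^ ((1:ℝ)/2 - 2 * δ)) / 2 * (P + N)
        = (1 - θ₁) * D + (1 - 3 * θ₁) * P
          - M * h ^ ((1:ℝ)/2 - 2 * δ) / 2 * (P + N) := by ring
      _ ≤ qWeight1D a ξ κ h δ u := hq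
  rw [hFF]
  exact MagStep3.final_arith D P N _ θ₁ (h ^ ((1:ℝ)/2 - 2 * δ)) A K M hD0 hP0 hN0 hM hA0
    hK2 hx0 hθ₁0 hθ₁b hNK hq'


end MagStep
end
end
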